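/- arXiv:1902.01999 — 4 statements merged into one kernel-verified Lean document; each statement's English description precedes it below -/
import Mathlib

section
/- Let P be a symmetric stochastic n×n matrix and T ⊆ [n] a subset such that for every nonempty R ⊆ T, Σ_{i∈R, j∉R} P_{ij} ≥ α·|R| for some α > 0. Then the principal submatrix P_T (rows and columns indexed by T) has spectral norm at most 1 − α²/2. -/
/-!
Extend `v` by zero to `w` and put `S = ∑ i, w i ^ 2`, `Q = ∑ i, ∑ j, w i * P i j * w j`. As `P`
is symmetric and stochastic, `∑ i, ∑ j, P i j * (w i ∓ w j) ^ 2 = 2 * S ∓ 2 * Q`, so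
Cauchy–Schwarz applied to `|w i ^ 2 - w j ^ 2| = |w i - w j| * |w i + w j|` gives
`(∑ i, ∑ j, P i j * |w i ^ 2 - w j ^ 2|) ^ 2 ≤ 4 * (S ^ 2 - Q ^ 2)`. A discrete co-area
inequality bounds the same sum below by `2 * α * S`: a nonnegative function supported in `T`
splits into layers `m • 1_R` over its level sets `R ⊆ T`, and each layer contributes `2 * m`
times the edge boundary of `R`, which is at least `α * #R`. Hence `Q ^ 2 ≤ (1 - α ^ 2) * S ^ 2`,
and `√(1 - α ^ 2) ≤ 1 - α ^ 2 / 2`.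
-/

open Finset

section

variable {ι : Type*} [Fintype ι] {P : Matrix ι ι ℝ}

lemma sum_sum_mul_left_eq_sum (hrow : ∀ i, ∑ j, P i j = 1) (a : ι → ℝ) :
    ∑ i, ∑ j, P i j * a i = ∑ i, a i := by
  simp only [← sum_mul, hrow, one_mul]

lemma sum_sum_mul_right_eq_sum (hsymm : ∀ i j, P i j = P j i) (hrow : ∀ i, ∑ j, P i j = 1)
    (a : ι → ℝ) : ∑ i, ∑ j, P i j * a j = ∑ i, a i := by
  have hcol : ∀ j, ∑ i, P i j = 1 := fun j =>
    (sum_congr rfl fun i _ => hsymm i j).trans (hrow j)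
  rw [sum_comm]
  simp only [← sum_mul, hcol, one_mul]

lemma sum_sum_mul_add_mul_sq (hsymm : ∀ i j, P i j = P j i) (hrow : ∀ i, ∑ j, P i j = 1)
    (w : ι → ℝ) (c : ℝ) :
    ∑ i, ∑ j, P i j * (w i + c * w j) ^ 2 =
      (1 + c ^ 2) * ∑ i, w i ^ 2 + 2 * c * ∑ i, ∑ j, w i * P i j * w j := by
  have hexpand : ∀ i j, P i j * (w i + c * w j) ^ 2 =
      P i j * w i ^ 2 + c ^ 2 * (P i j * w j ^ 2) + 2 * c * (w i * P i j * w j) := by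
    intro i j; ring
  simp only [hexpand, sum_add_distrib, ← mul_sum, sum_sum_mul_left_eq_sum hrow,
    sum_sum_mul_right_eq_sum hsymm hrow]
  ring

lemma sq_sum_sum_mul_abs_sq_sub_sq_le (hnonneg : ∀ i j, 0 ≤ P i j) (w : ι → ℝ) :
    (∑ i, ∑ j, P i j * |w i ^ 2 - w j ^ 2|) ^ 2 ≤
      (∑ i, ∑ j, P i j * (w i - w j) ^ 2) * ∑ i, ∑ j, P i j * (w i + w j) ^ 2 := by
  have hpair : ∀ i j, (P i j * |w i ^ 2 - w j ^ 2|) ^ 2 =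
      P i j * (w i - w j) ^ 2 * (P i j * (w i + w j) ^ 2) := by
    intro i j; rw [mul_pow, sq_abs]; ring
  refine sum_sq_le_sum_mul_sum_of_sq_le_mul _
    (fun i _ => sum_nonneg fun j _ => mul_nonneg (hnonneg i j) (sq_nonneg _))
    (fun i _ => sum_nonneg fun j _ => mul_nonneg (hnonneg i j) (sq_nonneg _))
    (fun i _ => sum_sq_le_sum_mul_sum_of_sq_le_mul _
      (fun j _ => mul_nonneg (hnonneg i j) (sq_nonneg _))
      (fun j _ => mul_nonneg (hnonneg i j) (sq_nonneg _))
      (fun j _ => (hpair i j).le))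

lemma sum_sum_mul_abs_add_sub_add {a b : ι → ℝ}
    (hab : ∀ i j, 0 ≤ (a i - a j) * (b i - b j)) :
    ∑ i, ∑ j, P i j * |(a i + b i) - (a j + b j)| =
      ∑ i, ∑ j, P i j * |a i - a j| + ∑ i, ∑ j, P i j * |b i - b j| := by
  have hpair : ∀ i j, |(a i + b i) - (a j + b j)| = |a i - a j| + |b i - b j| := by
    intro i j
    rw [add_sub_add_comm, abs_add_eq_add_abs_iff]
    exact nonneg_and_nonneg_or_nonpos_and_nonpos_of_mul_nonneg (hab i j)
  simp only [hpair, mul_add, sum_add_distrib]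

variable [DecidableEq ι]

lemma sum_sum_mul_abs_ite_sub_ite (hsymm : ∀ i j, P i j = P j i) (R : Finset ι) (c : ℝ) :
    ∑ i, ∑ j, P i j * |(if i ∈ R then c else 0) - (if j ∈ R then c else 0)| =
      2 * |c| * ∑ i ∈ R, ∑ j ∈ Rᶜ, P i j := by
  have hpair : ∀ i j, P i j * |(if i ∈ R then c else 0) - (if j ∈ R then c else 0)| =
      |c| * ((if i ∈ R then (if j ∈ Rᶜ then P i j else 0) else 0) +
        (if j ∈ R then (if i ∈ Rᶜ then P j i else 0) else 0)) := by
    intro i j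
    by_cases hi : i ∈ R <;> by_cases hj : j ∈ R <;> simp [hi, hj, hsymm i j, mul_comm]
  simp only [hpair, ← mul_sum, sum_add_distrib]
  rw [sum_comm (f := fun i j => if j ∈ R then (if i ∈ Rᶜ then P j i else 0) else 0)]
  simp only [sum_ite_irrel, sum_const_zero, Fintype.sum_ite_mem]
  ring

lemma sum_sum_mul_abs_ite_add_sub_ite_add (hsymm : ∀ i j, P i j = P j i) {R : Finset ι}
    {m : ℝ} (hm : 0 ≤ m) {g : ι → ℝ} (hg : ∀ i, 0 ≤ g i) (hgR : ∀ i ∉ R, g i = 0) :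
    ∑ i, ∑ j, P i j *
        |((if i ∈ R then m else 0) + g i) - ((if j ∈ R then m else 0) + g j)| =
      2 * m * ∑ i ∈ R, ∑ j ∈ Rᶜ, P i j + ∑ i, ∑ j, P i j * |g i - g j| := by
  rw [sum_sum_mul_abs_add_sub_add, sum_sum_mul_abs_ite_sub_ite hsymm, abs_of_nonneg hm]
  intro i j
  by_cases hi : i ∈ R <;> by_cases hj : j ∈ R <;>
    simp [hi, hj, hgR, mul_nonneg hm (hg i), mul_nonneg hm (hg j)]

theorem two_mul_mul_sum_le_sum_sum_mul_abs_sub (hsymm : ∀ i j, P i j = P j i)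
    {T : Finset ι} {α : ℝ}
    (hexp : ∀ R : Finset ι, R ⊆ T → R.Nonempty → α * #R ≤ ∑ i ∈ R, ∑ j ∈ Rᶜ, P i j)
    {f : ι → ℝ} (hf : ∀ i, 0 ≤ f i) (hfT : ∀ i ∉ T, f i = 0) :
    2 * α * ∑ i, f i ≤ ∑ i, ∑ j, P i j * |f i - f j| := by
  induction hN : #{i | f i ≠ 0} using Nat.strong_induction_on generalizing f with
  | _ N ih =>
  set R : Finset ι := {i | f i ≠ 0} with hR
  have hmemR : ∀ i, i ∈ R ↔ f i ≠ 0 := by simp [hR]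
  obtain hRempty | hRne := R.eq_empty_or_nonempty
  · have hf0 : ∀ i, f i = 0 := fun i => by simpa [hRempty] using hmemR i
    simp [hf0]
  -- Strip the bottom layer `m • 1_R`, `m` the least value of `f` on its support `R`: the rest
  -- `g` vanishes at the minimiser `i₀` too, so its support is smaller.
  obtain ⟨i₀, hi₀, hmin⟩ := R.exists_min_image f hRne
  set m := f i₀
  set g : ι → ℝ := fun i => f i - if i ∈ R then m else 0 with hgdef
  have hgR : ∀ i ∉ R, g i = 0 := fun i hi => by simpa [hgdef, hi] using hmemR i
  have hg : ∀ i, 0 ≤ g i := fun i => by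
    by_cases hi : i ∈ R
    · simpa [hgdef, hi] using hmin i hi
    · exact (hgR i hi).ge
  have hsupp : #{i | g i ≠ 0} < N := by
    refine hN ▸ card_lt_card (LE.le.trans_ssubset (fun i hi => ?_) (erase_ssubset hi₀))
    have hgi : g i ≠ 0 := by simpa using hi
    refine mem_erase.2 ⟨fun h => hgi (by simp [hgdef, h, hi₀, m]), ?_⟩
    by_contra h
    exact hgi (hgR i h)
  have hRT : R ⊆ T := fun i hi => by_contra fun h => (hmemR i).1 hi (hfT i h)
  have hIH := ih _ hsupp hg (fun i hi => hgR i fun h => hi (hRT h)) rfl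
  have hdecomp : ∀ i, (if i ∈ R then m else 0) + g i = f i := fun i => by simp [hgdef]
  have hsum : ∑ i, f i = m * #R + ∑ i, g i := by
    simp only [← hdecomp, sum_add_distrib, Fintype.sum_ite_mem, sum_const, nsmul_eq_mul]; ring
  have hvar : ∑ i, ∑ j, P i j * |f i - f j| =
      2 * m * ∑ i ∈ R, ∑ j ∈ Rᶜ, P i j + ∑ i, ∑ j, P i j * |g i - g j| := by
    simpa only [hdecomp] using
      sum_sum_mul_abs_ite_add_sub_ite_add hsymm (m := m) (hf i₀) hg hgR
  rw [hsum, hvar]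
  nlinarith [mul_le_mul_of_nonneg_left (hexp R hRT hRne) (hf i₀)]

theorem sq_sum_sum_mul_le (hsymm : ∀ i j, P i j = P j i) (hnonneg : ∀ i j, 0 ≤ P i j)
    (hrow : ∀ i, ∑ j, P i j = 1) {T : Finset ι} {α : ℝ} (hα : 0 ≤ α)
    (hexp : ∀ R : Finset ι, R ⊆ T → R.Nonempty → α * #R ≤ ∑ i ∈ R, ∑ j ∈ Rᶜ, P i j)
    {w : ι → ℝ} (hwT : ∀ i ∉ T, w i = 0) :
    (∑ i, ∑ j, w i * P i j * w j) ^ 2 ≤ (1 - α ^ 2) * (∑ i, w i ^ 2) ^ 2 := by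
  have hcoarea : 2 * α * ∑ i, w i ^ 2 ≤ ∑ i, ∑ j, P i j * |w i ^ 2 - w j ^ 2| :=
    two_mul_mul_sum_le_sum_sum_mul_abs_sub hsymm hexp (fun i => sq_nonneg (w i))
      fun i hi => by simp [hwT i hi]
  have hCS := sq_sum_sum_mul_abs_sq_sub_sq_le hnonneg w
  have hdiff := sum_sum_mul_add_mul_sq hsymm hrow w (-1)
  have hsum := sum_sum_mul_add_mul_sq hsymm hrow w 1
  simp only [neg_one_mul, ← sub_eq_add_neg, one_mul] at hdiff hsum
  rw [hdiff, hsum] at hCS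
  nlinarith [pow_le_pow_left₀ (by positivity) hcoarea 2]

end

lemma abs_le_one_sub_sq_div_two_mul {q s α : ℝ} (hs : 0 ≤ s)
    (h : q ^ 2 ≤ (1 - α ^ 2) * s ^ 2) : |q| ≤ (1 - α ^ 2 / 2) * s := by
  obtain rfl | hs := hs.eq_or_lt
  · simpa using h
  have hα : α ^ 2 ≤ 1 := by
    nlinarith [nonneg_of_mul_nonneg_left ((sq_nonneg q).trans h) (pow_pos hs 2)]
  exact abs_le_of_sq_le_sq (by nlinarith [sq_nonneg (α ^ 2 * s)]) (by nlinarith)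

lemma Finset.sum_coe_sort_eq_sum_of_eq_zero {ι M : Type*} [Fintype ι] [AddCommMonoid M]
    {T : Finset ι} {F : ι → M} (hF : ∀ i ∉ T, F i = 0) : ∑ i : T, F i = ∑ i, F i :=
  (sum_coe_sort T F).trans (sum_subset (subset_univ T) fun i _ hi => hF i hi)

/-- Spectral norm bound for a principal submatrix of a symmetric stochastic matrix,
stated via the Rayleigh quotient (for a symmetric matrix, the spectral norm equals
the supremum of `|vᵀ M v| / vᵀv`). -/
theorem stmt_2 (n : ℕ) (P : Matrix (Fin n) (Fin n) ℝ)
    (hsymm : ∀ i j, P i j = P j i)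
    (hnonneg : ∀ i j, 0 ≤ P i j)
    (hstoch : ∀ i, ∑ j, P i j = 1)
    (T : Finset (Fin n)) (α : ℝ) (hα : 0 < α)
    (hexp : ∀ R : Finset (Fin n), R ⊆ T → R.Nonempty →
      α * R.card ≤ ∑ i ∈ R, ∑ j ∈ Rᶜ, P i j) :
    ∀ v : {x // x ∈ T} → ℝ,
      |∑ i : {x // x ∈ T}, ∑ j : {x // x ∈ T}, v i * P i j * v j| ≤
        (1 - α ^ 2 / 2) * ∑ i : {x // x ∈ T}, (v i) ^ 2 := by
  intro v
  set w : Fin n → ℝ := fun i => if h : i ∈ T then v ⟨i, h⟩ else 0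
  have hwT : ∀ i ∉ T, w i = 0 := fun i hi => dif_neg hi
  have hwv : ∀ i : T, v i = w i := fun i => by simp [w]
  have hS : ∑ i : T, v i ^ 2 = ∑ i, w i ^ 2 := by
    simp only [hwv]
    exact sum_coe_sort_eq_sum_of_eq_zero (F := fun i => w i ^ 2) fun i hi => by simp [hwT i hi]
  have hQ : ∑ i : T, ∑ j : T, v i * P i j * v j = ∑ i, ∑ j, w i * P i j * w j := by
    simp only [hwv]
    rw [sum_coe_sort_eq_sum_of_eq_zero (F := fun i => ∑ j : T, w i * P i j * w j)
      fun i hi => by simp [hwT i hi]]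
    exact sum_congr rfl fun i _ =>
      sum_coe_sort_eq_sum_of_eq_zero (F := fun j => w i * P i j * w j) fun j hj => by
        simp [hwT j hj]
  rw [hS, hQ]
  exact abs_le_one_sub_sq_div_two_mul (sum_nonneg fun i _ => sq_nonneg _)
    (sq_sum_sum_mul_le hsymm hnonneg hstoch hα.le hexp hwT)
end

section
/- Let P be a symmetric stochastic matrix on [n] with Cheeger constant χ(P) ≥ α > 0. Then the hitting time of P, HitT(P) = max_{i,j} E[min{t : X_t = j} | X_0 = i], is at most C·(n log n)/α² for an absolute constant C. -/
/-!
Fix the target `j` and write `g = h j`. For a vertex `a` with `r ≥ 1` vertices strictly below it,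
let `S = {l | g a ≤ g l}` and let `k` be the highest vertex outside `S`. Summing the recurrence
`g = 1 + P g` over `S` and cancelling the flow inside `S` (this is where symmetry enters) gives
`(g a - g k) · ∂(S) ≤ |S|`, where `∂(S)` is the weight of the cut `(S, Sᶜ)`. The Cheeger bound
`∂(S) ≥ α · min(|S|, r)` turns this into `g a - g k ≤ (1 + n / r) / α`, so climbing the vertices in
increasing order of `g` gives `g a ≤ (r + n · H_r) / α = O(n log n / α)`.
-/

open Finset

lemma harmonic_mono : Monotone harmonic :=
  monotone_nat_of_le_succ fun n => by
    rw [harmonic_succ]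
    exact le_add_of_nonneg_right (by positivity)

lemma div_min_le_one_add_div {s r : ℝ} (hs : 0 < s) (hr : 0 < r) :
    s / min s r ≤ 1 + s / r := by
  rcases min_cases s r with ⟨hmin, -⟩ | ⟨hmin, -⟩
  · rw [hmin, div_self hs.ne']
    linarith [div_pos hs hr]
  · rw [hmin]
    linarith

lemma nat_add_mul_harmonic_le {n r : ℕ} (hn : 2 ≤ n) (hr : r < n) :
    (r + n * harmonic r : ℝ) ≤ 4 * n * Real.log n := by
  have hn' : (2 : ℝ) ≤ n := by exact_mod_cast hn
  have hr' : (r : ℝ) ≤ n := by exact_mod_cast hr.le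
  have hlog_r : Real.log r ≤ Real.log n := by
    rcases Nat.eq_zero_or_pos r with rfl | hr0
    · simpa using Real.log_natCast_nonneg n
    · exact Real.log_le_log (by exact_mod_cast hr0) hr'
  have hlog_n : 2 / 3 ≤ Real.log n :=
    calc (2 : ℝ) / 3 ≤ Real.log 2 := by linarith [Real.log_two_gt_d9]
      _ ≤ Real.log n := Real.log_le_log (by norm_num) hn'
  have hH : (harmonic r : ℝ) ≤ 1 + Real.log n := (harmonic_le_one_add_log r).trans (by linarith)
  nlinarith

lemma sum_sum_mul_sub_eq_zero_of_symm {ι : Type*} (P : Matrix ι ι ℝ) (hsym : ∀ i j, P i j = P j i)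
    (g : ι → ℝ) (S : Finset ι) :
    ∑ a ∈ S, ∑ k ∈ S, P a k * (g a - g k) = 0 := by
  have hswap : ∑ a ∈ S, ∑ k ∈ S, P a k * g k = ∑ a ∈ S, ∑ k ∈ S, P a k * g a := by
    rw [sum_comm]
    exact sum_congr rfl fun a _ => sum_congr rfl fun k _ => by rw [hsym]
  simp only [mul_sub, sum_sub_distrib, hswap, sub_self]

section Cut

variable {ι : Type*} [Fintype ι] [DecidableEq ι]

def cutWeight (P : Matrix ι ι ℝ) (S : Finset ι) : ℝ :=
  ∑ i ∈ S, ∑ k ∈ Sᶜ, P i k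

lemma sum_sub_sum_mul_eq_sum_compl (P : Matrix ι ι ℝ) (hsym : ∀ i j, P i j = P j i)
    (hrow : ∀ i, ∑ j, P i j = 1) (g : ι → ℝ) (S : Finset ι) :
    ∑ a ∈ S, (g a - ∑ k, P a k * g k) = ∑ a ∈ S, ∑ k ∈ Sᶜ, P a k * (g a - g k) := by
  have hdiff : ∀ a, g a - ∑ k, P a k * g k = ∑ k, P a k * (g a - g k) := fun a => by
    simp only [mul_sub, sum_sub_distrib, ← sum_mul, hrow, one_mul]
  calc ∑ a ∈ S, (g a - ∑ k, P a k * g k)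
      = ∑ a ∈ S, (∑ k ∈ S, P a k * (g a - g k) + ∑ k ∈ Sᶜ, P a k * (g a - g k)) :=
        sum_congr rfl fun a _ => by rw [hdiff, sum_add_sum_compl]
    _ = ∑ a ∈ S, ∑ k ∈ Sᶜ, P a k * (g a - g k) := by
        rw [sum_add_distrib, sum_sum_mul_sub_eq_zero_of_symm P hsym, zero_add]

lemma sub_mul_cutWeight_le_card (P : Matrix ι ι ℝ) (hsym : ∀ i j, P i j = P j i)
    (hnn : ∀ i j, 0 ≤ P i j) (hrow : ∀ i, ∑ j, P i j = 1) {g : ι → ℝ} {S : Finset ι}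
    (hrec : ∀ a ∈ S, g a = 1 + ∑ k, P a k * g k) {t M : ℝ}
    (ht : ∀ a ∈ S, t ≤ g a) (hM : ∀ k ∉ S, g k ≤ M) :
    (t - M) * cutWeight P S ≤ #S :=
  calc (t - M) * cutWeight P S = ∑ a ∈ S, ∑ k ∈ Sᶜ, P a k * (t - M) := by
        simp only [cutWeight, mul_comm (t - M), sum_mul]
    _ ≤ ∑ a ∈ S, ∑ k ∈ Sᶜ, P a k * (g a - g k) :=
        sum_le_sum fun a ha => sum_le_sum fun k hk => mul_le_mul_of_nonneg_left
          (by linarith [ht a ha, hM k (mem_compl.mp hk)]) (hnn a k)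
    _ = ∑ a ∈ S, (g a - ∑ k, P a k * g k) := (sum_sub_sum_mul_eq_sum_compl P hsym hrow g S).symm
    _ = #S := by
        rw [sum_congr rfl fun a ha => show g a - ∑ k, P a k * g k = 1 by linarith [hrec a ha]]
        simp

lemma le_one_of_forall_le_cutWeight_div (P : Matrix ι ι ℝ) (hnn : ∀ i j, 0 ≤ P i j)
    (hrow : ∀ i, ∑ j, P i j = 1) (hι : 1 < Fintype.card ι) {α : ℝ}
    (hχ : ∀ S : Finset ι, S.Nonempty → S ≠ univ → α ≤ cutWeight P S / min (#S : ℝ) #Sᶜ) :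
    α ≤ 1 := by
  obtain ⟨j⟩ : Nonempty ι := Fintype.card_pos_iff.mp (by omega)
  have hsingle : ({j} : Finset ι) ≠ univ := fun h => by
    have := congrArg card h
    rw [card_singleton, card_univ] at this
    omega
  have hmin : min (#{j} : ℝ) #({j} : Finset ι)ᶜ = 1 := by
    rw [card_compl, card_singleton, Nat.cast_one]
    exact min_eq_left (by exact_mod_cast (by omega : 1 ≤ Fintype.card ι - 1))
  calc α ≤ cutWeight P {j} := by
        simpa only [hmin, div_one] using hχ {j} (singleton_nonempty j) hsingle
    _ ≤ ∑ k, P j k := by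
        rw [cutWeight, sum_singleton]
        exact sum_le_sum_of_subset_of_nonneg (subset_univ _) fun k _ _ => hnn j k
    _ = 1 := hrow j

end Cut

section Rank

variable {ι : Type*} [Fintype ι]

noncomputable def rankBelow (g : ι → ℝ) (a : ι) : ℕ :=
  #{k | g k < g a}

lemma rankBelow_lt_card (g : ι → ℝ) (a : ι) : rankBelow g a < Fintype.card ι :=
  (card_lt_card (filter_ssubset.mpr ⟨a, mem_univ a, lt_irrefl (g a)⟩)).trans_eq card_univ

lemma exists_rankBelow_lt {g : ι → ℝ} {a : ι} (ha : 0 < rankBelow g a) :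
    ∃ k, g k < g a ∧ (∀ l, g l < g a → g l ≤ g k) ∧ rankBelow g k < rankBelow g a := by
  obtain ⟨k, hk, hkmax⟩ := exists_max_image _ g (card_pos.mp ha)
  have hka : g k < g a := (mem_filter.mp hk).2
  refine ⟨k, hka, fun l hl => hkmax l (by simpa using hl), card_lt_card ?_⟩
  refine ssubset_iff_of_subset (fun l hl => ?_) |>.mpr ⟨k, hk, by simp⟩
  simp only [mem_filter, mem_univ, true_and] at hl ⊢
  exact hl.trans hka

lemma le_div_of_rankBelow_step {g : ι → ℝ} {c α : ℝ} (hc : 0 ≤ c) (hα : 0 < α)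
    (hbase : ∀ a, rankBelow g a = 0 → g a ≤ 0)
    (hstep : ∀ a, 0 < rankBelow g a → ∃ k, rankBelow g k < rankBelow g a ∧
      g a ≤ g k + (1 + c / rankBelow g a) / α) (a : ι) :
    g a ≤ (rankBelow g a + c * harmonic (rankBelow g a)) / α := by
  induction hr : rankBelow g a using Nat.strong_induction_on generalizing a with
  | _ r ih =>
    rcases r with _ | m
    · simpa using hbase a hr
    · obtain ⟨k, hk, hak⟩ := hstep a (by omega)
      rw [hr] at hak
      have hHk : (harmonic (rankBelow g k) : ℝ) ≤ harmonic m := by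
        exact_mod_cast harmonic_mono (by omega : rankBelow g k ≤ m)
      have hrk : (rankBelow g k : ℝ) ≤ m := by exact_mod_cast (by omega : rankBelow g k ≤ m)
      calc g a ≤ g k + (1 + c / (m + 1 : ℕ)) / α := hak
        _ ≤ (rankBelow g k + c * harmonic (rankBelow g k)) / α + (1 + c / (m + 1 : ℕ)) / α := by
            gcongr
            exact ih _ (hr ▸ hk) k rfl
        _ ≤ (m + c * harmonic m) / α + (1 + c / (m + 1 : ℕ)) / α := by
            gcongr
        _ = ((m + 1 : ℕ) + c * harmonic (m + 1)) / α := by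
            simp only [harmonic_succ, Rat.cast_add, Rat.cast_inv, Rat.cast_natCast]
            push_cast
            ring

end Rank

section HittingTime

variable {ι : Type*} [Fintype ι] [DecidableEq ι]

lemma hittingTime_step (P : Matrix ι ι ℝ) (hsym : ∀ i j, P i j = P j i)
    (hnn : ∀ i j, 0 ≤ P i j) (hrow : ∀ i, ∑ j, P i j = 1) {α : ℝ} (hα : 0 < α)
    (hχ : ∀ S : Finset ι, S.Nonempty → S ≠ univ → α ≤ cutWeight P S / min (#S : ℝ) #Sᶜ)
    {g : ι → ℝ} {j : ι} (hgnn : ∀ i, 0 ≤ g i) (hgj : g j = 0)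
    (hrec : ∀ i, i ≠ j → g i = 1 + ∑ k, P i k * g k) {a : ι} (ha : 0 < rankBelow g a) :
    ∃ k, rankBelow g k < rankBelow g a ∧
      g a ≤ g k + (1 + Fintype.card ι / rankBelow g a) / α := by
  obtain ⟨k, hka, hkmax, hrank⟩ := exists_rankBelow_lt ha
  refine ⟨k, hrank, ?_⟩
  set S : Finset ι := {l | g a ≤ g l}
  have hSc : Sᶜ = ({l | g l < g a} : Finset ι) := by ext l; simp [S]
  have hjS : j ∉ S := by
    simpa only [S, mem_filter, mem_univ, true_and, hgj, not_le] using (hgnn k).trans_lt hka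
  have hkS : k ∉ S := by simpa [S] using hka
  have hS : (0 : ℝ) < #S := by exact_mod_cast card_pos.mpr ⟨a, by simp [S]⟩
  have hr : (0 : ℝ) < #Sᶜ := by exact_mod_cast card_pos.mpr ⟨k, mem_compl.mpr hkS⟩
  have hmin : 0 < min (#S : ℝ) #Sᶜ := lt_min hS hr
  have hcut : α * min (#S : ℝ) #Sᶜ ≤ cutWeight P S :=
    (le_div_iff₀ hmin).mp (hχ S ⟨a, by simp [S]⟩ fun h => hkS (h ▸ mem_univ k))
  have hdrop : (g a - g k) * cutWeight P S ≤ #S :=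
    sub_mul_cutWeight_le_card P hsym hnn hrow
      (fun i hi => hrec i fun h => hjS (h ▸ hi)) (fun i hi => by simpa [S] using hi)
      (fun i hi => hkmax i (by simpa [S] using hi))
  have hdrop' : g a - g k ≤ (#S : ℝ) / min (#S : ℝ) #Sᶜ / α := by
    rw [div_div, le_div_iff₀ (mul_pos hmin hα)]
    nlinarith [sub_pos.mpr hka]
  have hcard : (#S : ℝ) ≤ Fintype.card ι := by exact_mod_cast card_le_univ S
  have hbound : (#S : ℝ) / min (#S : ℝ) #Sᶜ ≤ 1 + Fintype.card ι / rankBelow g a := by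
    rw [show rankBelow g a = #Sᶜ by rw [hSc]; rfl]
    exact (div_min_le_one_add_div hS hr).trans (by gcongr)
  linarith [div_le_div_of_nonneg_right hbound hα.le]

lemma hittingTime_le (P : Matrix ι ι ℝ) (hsym : ∀ i j, P i j = P j i)
    (hnn : ∀ i j, 0 ≤ P i j) (hrow : ∀ i, ∑ j, P i j = 1) {α : ℝ} (hα : 0 < α)
    (hχ : ∀ S : Finset ι, S.Nonempty → S ≠ univ → α ≤ cutWeight P S / min (#S : ℝ) #Sᶜ)
    {g : ι → ℝ} {j : ι} (hgnn : ∀ i, 0 ≤ g i) (hgj : g j = 0)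
    (hrec : ∀ i, i ≠ j → g i = 1 + ∑ k, P i k * g k) (i : ι) :
    g i ≤ (rankBelow g i + Fintype.card ι * harmonic (rankBelow g i)) / α := by
  refine le_div_of_rankBelow_step (Nat.cast_nonneg _) hα (fun a ha => ?_)
    (fun a ha => hittingTime_step P hsym hnn hrow hα hχ hgnn hgj hrec ha) i
  have : j ∉ ({k | g k < g a} : Finset ι) := by
    rw [card_eq_zero.mp ha]
    exact notMem_empty j
  simpa [hgj] using this

end HittingTime

/-- Hitting-time bound: there is an absolute constant `C` such that for any symmetric
stochastic matrix `P` on `[n]` with Cheeger constant at least `α > 0`, the expected hitting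
times `h j i` (characterized by the standard first-step recurrence) are all at most
`C · n · log n / α²`. -/
theorem stmt_6 :
    ∃ C : ℝ, 0 < C ∧
      ∀ (n : ℕ) (P : Matrix (Fin n) (Fin n) ℝ),
        (∀ i j, P i j = P j i) →
        (∀ i j, 0 ≤ P i j) →
        (∀ i, ∑ j, P i j = 1) →
        ∀ α : ℝ, 0 < α →
        (∀ S : Finset (Fin n), S.Nonempty → S ≠ Finset.univ →
          α ≤ (∑ i ∈ S, ∑ j ∈ Sᶜ, P i j) / (min S.card Sᶜ.card : ℝ)) →
        ∀ h : Fin n → Fin n → ℝ,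
          (∀ i j, 0 ≤ h j i) →
          (∀ j, h j j = 0) →
          (∀ i j, i ≠ j → h j i = 1 + ∑ k, P i k * h j k) →
          ∀ i j, h j i ≤ C * n * Real.log n / α ^ 2 := by
  refine ⟨4, by norm_num, fun n P hsym hnn hrow α hα hχ h hpos h0 hrec i j => ?_⟩
  rcases lt_or_ge n 2 with hn | hn
  · interval_cases n
    · exact i.elim0
    · simp [Subsingleton.elim i j, h0]
  have hα1 : α ≤ 1 := le_one_of_forall_le_cutWeight_div P hnn hrow (by simp; omega) hχ
  have hnlog : 0 ≤ 4 * (n : ℝ) * Real.log n := by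
    have := Real.log_natCast_nonneg n
    positivity
  calc h j i ≤ (rankBelow (h j) i + n * harmonic (rankBelow (h j) i)) / α := by
        simpa using hittingTime_le P hsym hnn hrow hα hχ (fun k => hpos k j) (h0 j)
          (fun k hk => hrec k j hk) i
    _ ≤ 4 * n * Real.log n / α := by
        gcongr
        exact nat_add_mul_harmonic_le hn (by simpa using rankBelow_lt_card (h j) i)
    _ ≤ 4 * n * Real.log n / α ^ 2 :=
        div_le_div_of_nonneg_left hnlog (by positivity) (by nlinarith)
end

section
/- Let P and Q be symmetric stochastic matrices on [n] with 1 − ρ(Sq(P,Q)) ≥ ε, where Sq(P,Q)_{ij} = √(P_{ij}Q_{ij}) and ρ denotes the largest eigenvalue. If T ⊆ [n] satisfies Σ_{i,j∈T} P_{ij} ≥ (1 − ε/16)|T|, then the distributions Dist(T,P) and Dist(T,Q) satisfy d_Hel²(Dist(T,P), Dist(T,Q)) ≥ ε²/32. -/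
/-!
Write `a, b` for the mass of `η` under `Dist(T,P)`, `Dist(T,Q)` and `s = (1/|T|) Σ_{i,j∈T} √(P_ij Q_ij)`.
The Hellinger distance equals `1 - √(ab) - s`. Testing the spectral bound on the normalised
indicator of `T` gives `s ≤ 1 - ε`, and Cauchy–Schwarz gives `s ≤ √((1-a)(1-b))`, while the mass
hypothesis says `a ≤ ε/16`. If `b ≤ ε/2` then `√(ab) ≤ ε/4` and the first bound on `s` wins;
otherwise `√b ≥ 2√a`, and the second bound reduces the distance to that of two Bernoulli
distributions with parameters `a, b`, which is at least `(√b - √a)²/2 ≥ b/8 ≥ ε/16`.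
-/

open BigOperators

/-- The distribution `Dist(T, P)` on `(T × T) ∪ {η}`: the pair `(i,j)` gets mass
`P i j / |T|`, and the extra symbol `η` (encoded as `none`) gets the remaining mass. -/
noncomputable def distT (n : ℕ) (P : Matrix (Fin n) (Fin n) ℝ) (T : Finset (Fin n)) :
    Option ({x // x ∈ T} × {x // x ∈ T}) → ℝ
  | some (i, j) => P i j / T.card
  | none => 1 - (∑ i : {x // x ∈ T}, ∑ j : {x // x ∈ T}, P (i : Fin n) j) / T.card

open Finset Real

section Hellinger

variable {ι : Type*} [Fintype ι]

lemma half_sum_sq_sqrt_sub_sqrt_eq {f g : ι → ℝ} (hf : ∀ x, 0 ≤ f x) (hg : ∀ x, 0 ≤ g x)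
    (hf1 : ∑ x, f x = 1) (hg1 : ∑ x, g x = 1) :
    (1 / 2) * ∑ x, (√(f x) - √(g x)) ^ 2 = 1 - ∑ x, √(f x * g x) := by
  have hterm : ∀ x, (√(f x) - √(g x)) ^ 2 = f x + g x - 2 * √(f x * g x) := fun x => by
    rw [sub_sq, sq_sqrt (hf x), sq_sqrt (hg x), sqrt_mul (hf x)]
    ring
  simp only [hterm, sum_sub_distrib, sum_add_distrib, ← mul_sum, hf1, hg1]
  ring

lemma sq_sqrt_sub_sqrt_div_two_le {a b : ℝ} (ha₀ : 0 ≤ a) (ha₁ : a ≤ 1) (hb₀ : 0 ≤ b)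
    (hb₁ : b ≤ 1) : (√b - √a) ^ 2 / 2 ≤ 1 - √(a * b) - √((1 - a) * (1 - b)) := by
  have hbern := half_sum_sq_sqrt_sub_sqrt_eq (f := ![a, 1 - a]) (g := ![b, 1 - b])
    (by simp [Fin.forall_fin_two, ha₀, ha₁]) (by simp [Fin.forall_fin_two, hb₀, hb₁])
    (by simp) (by simp)
  simp only [Fin.sum_univ_two, Matrix.cons_val_zero, Matrix.cons_val_one] at hbern
  nlinarith [sq_nonneg (√(1 - a) - √(1 - b))]

end Hellinger

lemma le_one_sub_sqrt_mul_add {ε a b s : ℝ} (hε : 0 < ε) (ha₀ : 0 ≤ a) (ha₁ : a ≤ 1)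
    (hb₀ : 0 ≤ b) (hb₁ : b ≤ 1) (ha : a ≤ ε / 16) (hs₀ : 0 ≤ s) (hs : s ≤ 1 - ε)
    (hs' : s ≤ √((1 - a) * (1 - b))) :
    ε ^ 2 / 32 ≤ 1 - (√(a * b) + s) := by
  rcases le_or_gt b (ε / 2) with hb | hb
  · have hab : √(a * b) ≤ ε / 4 := by
      rw [sqrt_le_left (by positivity)]
      nlinarith [mul_le_mul ha hb hb₀ (by positivity)]
    nlinarith
  · have h2a : 2 * √a ≤ √b := by
      rw [le_sqrt (by positivity) hb₀, mul_pow, sq_sqrt ha₀]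
      linarith
    have hdist : b / 8 ≤ (√b - √a) ^ 2 / 2 := by
      nlinarith [sq_sqrt hb₀, sqrt_nonneg a]
    nlinarith [sq_sqrt_sub_sqrt_div_two_le ha₀ ha₁ hb₀ hb₁]

section Matrix

variable {ι κ : Type*}

lemma sum_sum_div_card_le_of_rayleigh [Fintype ι] {M : Matrix ι ι ℝ} {c : ℝ}
    (hM : ∀ v : ι → ℝ, ∑ i, v i ^ 2 = 1 → ∑ i, ∑ j, v i * M i j * v j ≤ c)
    {T : Finset ι} (hT : T.Nonempty) :
    (∑ i ∈ T, ∑ j ∈ T, M i j) / #T ≤ c := by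
  classical
  have hl : (0 : ℝ) < #T := by exact_mod_cast hT.card_pos
  set v : ι → ℝ := fun i => if i ∈ T then (√(#T : ℝ))⁻¹ else 0
  have hv : ∑ i, v i ^ 2 = 1 := by
    simp [v, ite_pow, sum_ite_mem, inv_pow, sq_sqrt hl.le, hl.ne']
  have hquad : ∑ i, ∑ j, v i * M i j * v j = (∑ i ∈ T, ∑ j ∈ T, M i j) / #T := by
    simp only [v, ite_mul, mul_ite, zero_mul, mul_zero, sum_ite_mem, univ_inter, sum_ite_irrel,
      sum_const_zero, sum_div]
    refine sum_congr rfl fun i _ => sum_congr rfl fun j _ => ?_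
    rw [mul_right_comm, ← mul_inv, mul_self_sqrt hl.le, div_eq_inv_mul]
  exact hquad ▸ hM v hv

lemma sum_sum_le_card [Fintype κ] {M : Matrix ι κ ℝ} (hM₀ : ∀ i j, 0 ≤ M i j)
    (hM₁ : ∀ i, ∑ j, M i j ≤ 1) (s : Finset ι) (t : Finset κ) :
    ∑ i ∈ s, ∑ j ∈ t, M i j ≤ #s :=
  calc ∑ i ∈ s, ∑ j ∈ t, M i j ≤ ∑ i ∈ s, (1 : ℝ) :=
        sum_le_sum fun i _ =>
          (sum_le_sum_of_subset_of_nonneg (subset_univ t) fun j _ _ => hM₀ i j).trans (hM₁ i)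
    _ = #s := by simp

lemma sum_sum_sqrt_mul_le {M N : Matrix ι κ ℝ} (hM : ∀ i j, 0 ≤ M i j) (hN : ∀ i j, 0 ≤ N i j)
    (s : Finset ι) (t : Finset κ) :
    ∑ i ∈ s, ∑ j ∈ t, √(M i j * N i j) ≤
      √((∑ i ∈ s, ∑ j ∈ t, M i j) * ∑ i ∈ s, ∑ j ∈ t, N i j) := by
  rw [sqrt_mul (sum_nonneg fun i _ => sum_nonneg fun j _ => hM i j), ← sum_product' s t M,
    ← sum_product' s t N, ← sum_product' s t fun i j => √(M i j * N i j)]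
  simp only [sqrt_mul (hM _ _)]
  exact sum_sqrt_mul_sqrt_le _ (fun p : ι × κ => hM p.1 p.2) (fun p => hN p.1 p.2)

end Matrix

section distT

lemma sum_coe_sort_sum_coe_sort {ι M : Type*} [AddCommMonoid M] (s : Finset ι) (f : ι → ι → M) :
    ∑ i : s, ∑ j : s, f i j = ∑ i ∈ s, ∑ j ∈ s, f i j := by
  simp only [sum_coe_sort s (f _), sum_coe_sort s (fun i => ∑ j ∈ s, f i j)]

variable {n : ℕ} {P Q : Matrix (Fin n) (Fin n) ℝ} {T : Finset (Fin n)}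

lemma distT_none : distT n P T none = 1 - (∑ i ∈ T, ∑ j ∈ T, P i j) / #T := by
  rw [distT, sum_coe_sort_sum_coe_sort T P]

lemma sum_distT : ∑ x, distT n P T x = 1 := by
  rw [Fintype.sum_option, distT_none, Fintype.sum_prod_type]
  simp only [distT, ← sum_div, sum_coe_sort_sum_coe_sort T P]
  ring

lemma distT_nonneg (hP₀ : ∀ i j, 0 ≤ P i j) (hP₁ : ∀ i, ∑ j, P i j ≤ 1) :
    ∀ x, 0 ≤ distT n P T x
  | some (i, j) => div_nonneg (hP₀ i j) (Nat.cast_nonneg _)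
  | none => by
    rw [distT_none, sub_nonneg]
    exact div_le_one_of_le₀ (sum_sum_le_card hP₀ hP₁ T T) (Nat.cast_nonneg _)

lemma distT_none_le_one (hP₀ : ∀ i j, 0 ≤ P i j) : distT n P T none ≤ 1 := by
  rw [distT_none, sub_le_self_iff]
  exact div_nonneg (sum_nonneg fun i _ => sum_nonneg fun j _ => hP₀ i j) (Nat.cast_nonneg _)

lemma sum_sqrt_distT_mul_distT :
    ∑ x, √(distT n P T x * distT n Q T x) =
      √(distT n P T none * distT n Q T none) + (∑ i ∈ T, ∑ j ∈ T, √(P i j * Q i j)) / #T := by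
  rw [Fintype.sum_option, Fintype.sum_prod_type]
  congr 1
  simp only [distT, div_mul_div_comm, sqrt_div' _ (mul_self_nonneg _),
    sqrt_mul_self (Nat.cast_nonneg _), ← sum_div]
  rw [sum_coe_sort_sum_coe_sort T fun i j => √(P i j * Q i j)]

lemma sum_sqrt_mul_div_card_le (hP₀ : ∀ i j, 0 ≤ P i j) (hQ₀ : ∀ i j, 0 ≤ Q i j) :
    (∑ i ∈ T, ∑ j ∈ T, √(P i j * Q i j)) / #T ≤
      √((1 - distT n P T none) * (1 - distT n Q T none)) := by
  rw [distT_none, distT_none, sub_sub_cancel, sub_sub_cancel, div_mul_div_comm,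
    sqrt_div' _ (mul_self_nonneg _), sqrt_mul_self (Nat.cast_nonneg _)]
  gcongr
  exact sum_sum_sqrt_mul_le hP₀ hQ₀ T T

end distT

/-- The bound `ρ(Sq(P,Q)) ≤ 1 - ε` is encoded through the Rayleigh quotient of `Sq(P,Q)`. -/
theorem stmt_11_general (n : ℕ) (P Q : Matrix (Fin n) (Fin n) ℝ)
    (hPnonneg : ∀ i j, 0 ≤ P i j) (hQnonneg : ∀ i j, 0 ≤ Q i j)
    (hPstoch : ∀ i, ∑ j, P i j = 1) (hQstoch : ∀ i, ∑ j, Q i j = 1)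
    (ε : ℝ) (hε : 0 < ε)
    (hρ : ∀ v : Fin n → ℝ, ∑ i, (v i) ^ 2 = 1 →
      ∑ i, ∑ j, v i * Real.sqrt (P i j * Q i j) * v j ≤ 1 - ε)
    (T : Finset (Fin n)) (hT : T.Nonempty)
    (hTmass : (1 - ε / 16) * T.card ≤ ∑ i ∈ T, ∑ j ∈ T, P i j) :
    ε ^ 2 / 32 ≤ (1 / 2) * ∑ x : Option ({x // x ∈ T} × {x // x ∈ T}),
      (Real.sqrt (distT n P T x) - Real.sqrt (distT n Q T x)) ^ 2 := by
  have hl : (0 : ℝ) < #T := by exact_mod_cast hT.card_pos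
  have hP₀ := distT_nonneg (T := T) hPnonneg fun i => (hPstoch i).le
  have hQ₀ := distT_nonneg (T := T) hQnonneg fun i => (hQstoch i).le
  have hmass : distT n P T none ≤ ε / 16 := by
    rw [distT_none, sub_le_comm, le_div_iff₀ hl]
    linarith
  rw [half_sum_sq_sqrt_sub_sqrt_eq hP₀ hQ₀ sum_distT sum_distT, sum_sqrt_distT_mul_distT]
  exact le_one_sub_sqrt_mul_add hε (hP₀ none) (distT_none_le_one hPnonneg) (hQ₀ none)
    (distT_none_le_one hQnonneg) hmass (by positivity)
    (sum_sum_div_card_le_of_rayleigh hρ hT)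
    (sum_sqrt_mul_div_card_le hPnonneg hQnonneg)

/-- If `Dist(P,Q) = 1 - ρ(Sq(P,Q)) ≥ ε` (the largest-eigenvalue bound is stated via the
Rayleigh quotient of the symmetric matrix `Sq(P,Q)`) and `T` retains most of the mass of `P`,
then `Dist(T,P)` and `Dist(T,Q)` are far in squared Hellinger distance. -/
theorem stmt_11 (n : ℕ) (P Q : Matrix (Fin n) (Fin n) ℝ)
    (hPsymm : ∀ i j, P i j = P j i) (hQsymm : ∀ i j, Q i j = Q j i)
    (hPnonneg : ∀ i j, 0 ≤ P i j) (hQnonneg : ∀ i j, 0 ≤ Q i j)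
    (hPstoch : ∀ i, ∑ j, P i j = 1) (hQstoch : ∀ i, ∑ j, Q i j = 1)
    (ε : ℝ) (hε : 0 < ε)
    (hρ : ∀ v : Fin n → ℝ, ∑ i, (v i) ^ 2 = 1 →
      ∑ i, ∑ j, v i * Real.sqrt (P i j * Q i j) * v j ≤ 1 - ε)
    (T : Finset (Fin n)) (hT : T.Nonempty)
    (hTmass : (1 - ε / 16) * T.card ≤ ∑ i ∈ T, ∑ j ∈ T, P i j) :
    ε ^ 2 / 32 ≤ (1 / 2) * ∑ x : Option ({x // x ∈ T} × {x // x ∈ T}),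
      (Real.sqrt (distT n P T x) - Real.sqrt (distT n Q T x)) ^ 2 :=
  stmt_11_general n P Q hPnonneg hQnonneg hPstoch hQstoch ε hε hρ T hT hTmass
end

section
/- In Case 1 of Lemma (Hellinger bound): if P, Q are symmetric stochastic, 1 − ρ(Sq(P,Q)) ≥ ε, T satisfies Σ_{i,j∈T}P_{ij} ≥ (1−ε/16)|T| and Σ_{i,j∈T}Q_{ij} ≥ (1 − 5ε/16)|T|, then d_Hel²(Dist(T,P),Dist(T,Q)) ≥ ε/2. -/
open BigOperators

/-!
Drop the term of `η`: the squared Hellinger distance only decreases. On `T × T` one has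
`(√p - √q)² ≥ p + q - 2√(pq)`, so twice the distance is at least `(A + B - 2R) / |T|`, where
`A` and `B` are the masses of `P` and `Q` on `T × T` and `R = ∑_{i,j ∈ T} √(P i j Q i j)`.
Testing the spectral bound on `v = 1_T / √|T|` gives `R ≤ (1 - ε)|T|`, so the distance is at
least `((1 - ε/16) + (1 - 5ε/16) - 2(1 - ε)) / 2 = 13ε/16`.
-/

open Finset

theorem Real.add_sub_two_mul_sqrt_mul_le_sq_sub_sqrt (p q : ℝ) :
    p + q - 2 * √(p * q) ≤ (√p - √q) ^ 2 := by
  have hsqrt_mul : √p * √q ≤ √(p * q) := by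
    rcases le_or_gt 0 p with hp | hp
    · rw [Real.sqrt_mul hp]
    · rw [Real.sqrt_eq_zero'.mpr hp.le, zero_mul]
      exact Real.sqrt_nonneg _
  have hp : p ≤ √p ^ 2 := Real.sq_sqrt' ▸ le_max_left p 0
  have hq : q ≤ √q ^ 2 := Real.sq_sqrt' ▸ le_max_left q 0
  nlinarith

theorem sum_sum_le_mul_card_of_quadForm_le {ι : Type*} [Fintype ι] [DecidableEq ι]
    (M : Matrix ι ι ℝ) (μ : ℝ)
    (hM : ∀ v : ι → ℝ, ∑ i, v i ^ 2 = 1 → ∑ i, ∑ j, v i * M i j * v j ≤ μ)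
    (T : Finset ι) (hT : T.Nonempty) :
    ∑ i ∈ T, ∑ j ∈ T, M i j ≤ μ * #T := by
  have hc : (0 : ℝ) < #T := by exact_mod_cast hT.card_pos
  set s := (√(#T : ℝ))⁻¹
  have hs : s ^ 2 = (#T : ℝ)⁻¹ := by rw [inv_pow, Real.sq_sqrt hc.le]
  let v : ι → ℝ := fun i => if i ∈ T then s else 0
  have hv : ∑ i, v i ^ 2 = 1 := by
    simp [v, ite_pow, sum_ite_mem, hs, hc.ne']
  have hquad : ∑ i, ∑ j, v i * M i j * v j = s ^ 2 * ∑ i ∈ T, ∑ j ∈ T, M i j := by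
    simp only [v, ite_mul, mul_ite, zero_mul, mul_zero, sum_ite_mem, univ_inter,
      sum_ite_irrel, sum_const_zero, mul_sum]
    exact sum_congr rfl fun i _ => sum_congr rfl fun j _ => by ring
  have := hM v hv
  rw [hquad, hs, inv_mul_le_iff₀ hc] at this
  linarith

theorem sum_sub_two_sqrt_mul_div_card_le_sum_sq_sub_sqrt_distT (n : ℕ)
    (P Q : Matrix (Fin n) (Fin n) ℝ) (T : Finset (Fin n)) :
    (∑ i ∈ T, ∑ j ∈ T, (P i j + Q i j - 2 * √(P i j * Q i j))) / #T ≤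
      ∑ x, (√(distT n P T x) - √(distT n Q T x)) ^ 2 := by
  have hc : (0 : ℝ) ≤ #T := Nat.cast_nonneg _
  calc (∑ i ∈ T, ∑ j ∈ T, (P i j + Q i j - 2 * √(P i j * Q i j))) / #T
      = ∑ x : T × T, (distT n P T (some x) + distT n Q T (some x)
          - 2 * √(distT n P T (some x) * distT n Q T (some x))) := by
        rw [Fintype.sum_prod_type, ← sum_coe_sort T, sum_div]
        refine sum_congr rfl fun i _ => ?_
        rw [← sum_coe_sort T, sum_div]
        refine sum_congr rfl fun j _ => ?_
        rw [distT, distT, div_mul_div_comm, Real.sqrt_div' _ (mul_self_nonneg _),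
          Real.sqrt_mul_self hc]
        ring
    _ ≤ ∑ x : T × T, (√(distT n P T (some x)) - √(distT n Q T (some x))) ^ 2 :=
        sum_le_sum fun x _ => Real.add_sub_two_mul_sqrt_mul_le_sq_sub_sqrt _ _
    _ ≤ ∑ x, (√(distT n P T x) - √(distT n Q T x)) ^ 2 := by
        rw [Fintype.sum_option]
        exact le_add_of_nonneg_left (sq_nonneg _)

theorem stmt_12_general (n : ℕ) (P Q : Matrix (Fin n) (Fin n) ℝ)
    (ε : ℝ) (hε : 0 < ε)
    (hρ : ∀ v : Fin n → ℝ, ∑ i, (v i) ^ 2 = 1 →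
      ∑ i, ∑ j, v i * Real.sqrt (P i j * Q i j) * v j ≤ 1 - ε)
    (T : Finset (Fin n)) (hT : T.Nonempty)
    (hTmass : (1 - ε / 16) * T.card ≤ ∑ i ∈ T, ∑ j ∈ T, P i j)
    (hTmassQ : (1 - 5 * ε / 16) * T.card ≤ ∑ i ∈ T, ∑ j ∈ T, Q i j) :
    ε / 2 ≤ (1 / 2) * ∑ x : Option ({x // x ∈ T} × {x // x ∈ T}),
      (Real.sqrt (distT n P T x) - Real.sqrt (distT n Q T x)) ^ 2 := by
  have hc : (0 : ℝ) < #T := by exact_mod_cast hT.card_pos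
  have hR := sum_sum_le_mul_card_of_quadForm_le (fun i j => √(P i j * Q i j)) (1 - ε) hρ T hT
  have hsplit : ∑ i ∈ T, ∑ j ∈ T, (P i j + Q i j - 2 * √(P i j * Q i j)) =
      ∑ i ∈ T, ∑ j ∈ T, P i j + ∑ i ∈ T, ∑ j ∈ T, Q i j
        - 2 * ∑ i ∈ T, ∑ j ∈ T, √(P i j * Q i j) := by
    simp only [sum_sub_distrib, sum_add_distrib, mul_sum]
  have hlower : 13 * ε / 8 ≤ (∑ i ∈ T, ∑ j ∈ T, (P i j + Q i j - 2 * √(P i j * Q i j))) / #T := by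
    rw [le_div_iff₀ hc, hsplit]
    linarith
  linarith [sum_sub_two_sqrt_mul_div_card_le_sum_sq_sub_sqrt_distT n P Q T]

/-- If `Dist(P,Q) = 1 - ρ(Sq(P,Q)) ≥ ε` (the largest-eigenvalue bound is stated via the
Rayleigh quotient of the symmetric matrix `Sq(P,Q)`) and `T` retains most of the mass of `P`,
then `Dist(T,P)` and `Dist(T,Q)` are far in squared Hellinger distance. -/
theorem stmt_12 (n : ℕ) (P Q : Matrix (Fin n) (Fin n) ℝ)
    (hPsymm : ∀ i j, P i j = P j i) (hQsymm : ∀ i j, Q i j = Q j i)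
    (hPnonneg : ∀ i j, 0 ≤ P i j) (hQnonneg : ∀ i j, 0 ≤ Q i j)
    (hPstoch : ∀ i, ∑ j, P i j = 1) (hQstoch : ∀ i, ∑ j, Q i j = 1)
    (ε : ℝ) (hε : 0 < ε)
    (hρ : ∀ v : Fin n → ℝ, ∑ i, (v i) ^ 2 = 1 →
      ∑ i, ∑ j, v i * Real.sqrt (P i j * Q i j) * v j ≤ 1 - ε)
    (T : Finset (Fin n)) (hT : T.Nonempty)
    (hTmass : (1 - ε / 16) * T.card ≤ ∑ i ∈ T, ∑ j ∈ T, P i j)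
    (hTmassQ : (1 - 5 * ε / 16) * T.card ≤ ∑ i ∈ T, ∑ j ∈ T, Q i j) :
    ε / 2 ≤ (1 / 2) * ∑ x : Option ({x // x ∈ T} × {x // x ∈ T}),
      (Real.sqrt (distT n P T x) - Real.sqrt (distT n Q T x)) ^ 2 :=
  stmt_12_general n P Q ε hε hρ T hT hTmass hTmassQ
end
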